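/- arXiv:1910.04477 — 3 statements merged into one kernel-verified Lean document; each statement's English description precedes it below -/
import Mathlib

section
/- Let d = 2 or d = 3 and assume that the potential φ satisfies the confinement assumption (C). Then the solution (n_∞, c_∞) of the Poisson–Boltzmann equation is such that c_∞ is bounded (with 0 ≤ c_∞) if d = 3, and ‖∇c_∞‖_{L^q(ℝ²)} is finite for every q ∈ (2, +∞] if d = 2. -/
open MeasureTheory Filter
open scoped ENNReal RealInnerProductSpace

noncomputable section

/-- Euclidean space `ℝ^d`. -/
abbrev Euc (d : ℕ) := EuclideanSpace ℝ (Fin d)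

/-- Green function of the Laplacian on `ℝ^d` for `d = 2` or `d = 3`. -/
def Gker (d : ℕ) (x : Euc d) : ℝ :=
  if d = 2 then -(1 / (2 * Real.pi)) * Real.log ‖x‖ else 1 / (4 * Real.pi * ‖x‖)

/-- Newtonian potential `G_d * ρ`. -/
def newt (d : ℕ) (ρ : Euc d → ℝ) (x : Euc d) : ℝ := ∫ y, Gker d (x - y) * ρ y

/-- `i`-th partial derivative. -/
def pd {d : ℕ} (i : Fin d) (f : Euc d → ℝ) (x : Euc d) : ℝ :=
  fderiv ℝ f x (EuclideanSpace.single i 1)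

/-- Laplacian as the sum of the second partial derivatives. -/
def lap {d : ℕ} (f : Euc d → ℝ) (x : Euc d) : ℝ := ∑ i, pd i (pd i f) x

/-- Divergence of a vector field. -/
def divg {d : ℕ} (V : Euc d → Euc d) (x : Euc d) : ℝ := ∑ i, pd i (fun y => V y i) x

/-- The confinement assumption (C): `φ` is locally `W^{1,∞}` with `∇φ ∈ W^{1,∞}`
(gradient bounded and Lipschitz), together with (C1), (C3) and (C4). -/
def ConfC (d : ℕ) (M : ℝ) (φ : Euc d → ℝ) : Prop :=
  Differentiable ℝ φ
  ∧ (∃ L : NNReal, LipschitzWith L (gradient φ))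
  ∧ (∃ K : ℝ, ∀ x, ‖gradient φ x‖ ≤ K)
  -- (C1): liminf_{|x|→∞} φ(x)/log|x| > d
  ∧ (∃ a : ℝ, (d : ℝ) < a ∧ ∀ᶠ x in cocompact (Euc d), a * Real.log ‖x‖ ≤ φ x)
  -- (C3)
  ∧ (∃ σ > (0:ℝ), ∀ᶠ x in cocompact (Euc d), σ ≤ ‖gradient φ x‖ ^ 2 / 4 - lap φ x / 2)
  ∧ (∃ δ > (0:ℝ), ∀ᶠ x in cocompact (Euc d), δ ≤ ‖gradient φ x‖)
  -- (C4): if d = 2, liminf_{|x|→∞} φ(x)/log|x| > 4 + M/(2π)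
  ∧ (d = 2 → ∃ a : ℝ, 4 + M / (2 * Real.pi) < a ∧
      ∀ᶠ x in cocompact (Euc d), a * Real.log ‖x‖ ≤ φ x)

/-- The free energy `F[n]`. -/
def freeEnergy (d : ℕ) (φ n : Euc d → ℝ) : ℝ :=
  (∫ x, n x * Real.log (n x)) + (∫ x, n x * φ x) + (1 / 2) * ∫ x, n x * newt d n x

/-- Membership in the set `X` of admissible densities of mass `M`. -/
def memX (d : ℕ) (M : ℝ) (φ n : Euc d → ℝ) : Prop :=
  (∀ x, 0 ≤ n x) ∧ Integrable n ∧ (∫ x, n x) = M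
  ∧ Integrable (fun x => n x * Real.log (n x)) ∧ Integrable (fun x => n x * φ x)

/-- Finiteness of the free energy: all three integrands are integrable. -/
def FiniteFreeEnergy (d : ℕ) (φ n : Euc d → ℝ) : Prop :=
  Integrable (fun x => n x * Real.log (n x)) ∧ Integrable (fun x => n x * φ x)
  ∧ Integrable (fun x => n x * newt d n x)

/-- `(n∞, c∞)` is the stationary solution: `c∞ = G_d * n∞` solves the
Poisson-Boltzmann equation `−Δc∞ = n∞ = M e^{−c∞−φ}/∫ e^{−c∞−φ}`. -/
def IsSteadyState (d : ℕ) (M : ℝ) (φ nS cS : Euc d → ℝ) : Prop :=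
  (∀ x, cS x = newt d nS x) ∧ (∀ x, -lap cS x = nS x)
  ∧ ∀ x, nS x = M * Real.exp (-cS x - φ x) / ∫ y, Real.exp (-cS y - φ y)

/-- `n` solves the Poisson–Nernst–Planck system with confinement potential `φ`:
`∂n/∂t = Δn + ∇·(n∇c) + ∇·(n∇φ)` with `c(t,·) = G_d * n(t,·)`. -/
def IsPNPSol (d : ℕ) (φ : Euc d → ℝ) (n : ℝ → Euc d → ℝ) : Prop :=
  ∀ t > (0:ℝ), ∀ x,
    deriv (fun s => n s x) t =
      lap (n t) x
      + divg (fun y => n t y • gradient (newt d (n t)) y) x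
      + divg (fun y => n t y • gradient φ y) x


/-!
In dimension three the kernel is positive, so `c∞ ≥ 0`; then `n∞ ≤ C e^{-φ}` is bounded by (C1),
and splitting the kernel at distance one bounds `c∞` by `‖n∞‖_∞ ∫_{B₁} |z|⁻¹ + M`.

In dimension two, `c∞` can only be finite if `∫ log (1 + |y|) n∞ < ∞`, and then
`log |x - y| ≤ log (1 + |x|) + log (1 + |y|)` gives `c∞(x) ≥ -(M log (1 + |x|) + J) / 2π`.
With (C4) this makes `n∞` decay like `(1 + |y|)^{-b}` with `b > 4`, so the Riesz potential
`∫ |ξ - y|⁻¹ n∞(y) dy` is `O((1 + |x|)⁻¹)` for `ξ` near `x`. As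
`|log a - log b| ≤ |a - b| (a⁻¹ + b⁻¹)`, `c∞` is Lipschitz near `x` with that constant, so
`|∇c∞(x)| = O((1 + |x|)⁻¹)`, which lies in `L^q(ℝ²)` exactly when `q > 2`.
-/

open Metric Set Module Real Topology InnerProductSpace

section InverseNormKernel

variable {E : Type*} [NormedAddCommGroup E] [NormedSpace ℝ E] [FiniteDimensional ℝ E]
  [MeasurableSpace E] [BorelSpace E] {μ : Measure E} [μ.IsAddHaarMeasure]

lemma integrableOn_inv_norm_ball (hE : 2 ≤ finrank ℝ E) (r : ℝ) :
    IntegrableOn (fun z : E => ‖z‖⁻¹) (ball 0 r) μ :=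
  integrableOn_ball_of_norm_le_rpow (C := 1) (α := 1) (by omega) (by exact_mod_cast hE)
    (ae_of_all _ fun z => by simp [Real.rpow_neg_one]) (by fun_prop)

omit [NormedSpace ℝ E] [FiniteDimensional ℝ E] [MeasurableSpace E] [BorelSpace E] in
lemma indicator_ball_zero_comp_sub (g : E → ℝ) (ξ : E) (r : ℝ) :
    (fun y => (ball 0 r).indicator g (ξ - y)) = (ball ξ r).indicator (fun y => g (ξ - y)) := by
  ext y
  simp only [Set.indicator, mem_ball', dist_eq_norm, zero_sub, norm_neg]

lemma integrableOn_ball_inv_norm_sub (hE : 2 ≤ finrank ℝ E) (ξ : E) (r : ℝ) :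
    IntegrableOn (fun y => ‖ξ - y‖⁻¹) (ball ξ r) μ := by
  rw [← integrable_indicator_iff measurableSet_ball, ← indicator_ball_zero_comp_sub (‖·‖⁻¹)]
  exact ((integrableOn_inv_norm_ball hE r).integrable_indicator measurableSet_ball).comp_sub_left ξ

lemma setIntegral_ball_inv_norm_sub (ξ : E) (r : ℝ) :
    ∫ y in ball ξ r, ‖ξ - y‖⁻¹ ∂μ = ∫ z in ball 0 r, ‖z‖⁻¹ ∂μ := by
  rw [← integral_indicator measurableSet_ball, ← indicator_ball_zero_comp_sub (‖·‖⁻¹),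
    integral_sub_left_eq_self, integral_indicator measurableSet_ball]

/-- Majorant of `y ↦ ‖ξ - y‖⁻¹ * ρ y` when `ρ ≤ B` on `ball ξ (max 1 r)`. -/
def invNormKernelMajorant (ξ : E) (r B : ℝ) (ρ : E → ℝ) (y : E) : ℝ :=
  (ball ξ 1).indicator (fun y => B * ‖ξ - y‖⁻¹) y + (ball ξ r).indicator (fun _ => B) y
    + r⁻¹ * ρ y

omit [NormedSpace ℝ E] [FiniteDimensional ℝ E] [MeasurableSpace E] [BorelSpace E] in
lemma inv_norm_sub_mul_le_invNormKernelMajorant {ρ : E → ℝ} (hρ0 : ∀ y, 0 ≤ ρ y) {ξ : E}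
    {r B : ℝ} (hr : 0 < r) (hB : ∀ y, ‖ξ - y‖ < max 1 r → ρ y ≤ B) (y : E) :
    ‖ξ - y‖⁻¹ * ρ y ≤ invNormKernelMajorant ξ r B ρ y := by
  have hmem : ∀ s, y ∈ ball ξ s ↔ ‖ξ - y‖ < s := fun s => by rw [mem_ball', dist_eq_norm]
  have hB0 : 0 ≤ B := (hρ0 ξ).trans (hB ξ (by simp))
  have h₁ : 0 ≤ (ball ξ 1).indicator (fun y => B * ‖ξ - y‖⁻¹) y :=
    indicator_nonneg (fun _ _ => by positivity) y
  have h₂ : 0 ≤ (ball ξ r).indicator (fun _ => B) y := indicator_nonneg (fun _ _ => hB0) y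
  have h₃ : 0 ≤ r⁻¹ * ρ y := mul_nonneg (inv_nonneg.2 hr.le) (hρ0 y)
  unfold invNormKernelMajorant
  by_cases hy1 : ‖ξ - y‖ < 1
  · rw [indicator_of_mem ((hmem 1).2 hy1), mul_comm B]
    have := mul_le_mul_of_nonneg_left (hB y (lt_max_of_lt_left hy1))
      (inv_nonneg.2 (norm_nonneg (ξ - y)))
    linarith
  have hinv : ‖ξ - y‖⁻¹ ≤ 1 := inv_le_one_of_one_le₀ (not_lt.1 hy1)
  by_cases hyr : ‖ξ - y‖ < r
  · rw [indicator_of_mem ((hmem r).2 hyr)]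
    have := mul_le_mul hinv (hB y (lt_max_of_lt_right hyr)) (hρ0 y) zero_le_one
    linarith
  · have := mul_le_mul_of_nonneg_right (inv_anti₀ hr (not_lt.1 hyr)) (hρ0 y)
    linarith

lemma integrable_invNormKernelMajorant_pieces (hE : 2 ≤ finrank ℝ E) (ξ : E) (r B : ℝ) :
    Integrable ((ball ξ 1).indicator fun y => B * ‖ξ - y‖⁻¹) μ
      ∧ Integrable ((ball ξ r).indicator fun _ => B) μ :=
  ⟨IntegrableOn.integrable_indicator ((integrableOn_ball_inv_norm_sub hE ξ 1).const_mul B)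
      measurableSet_ball,
    (integrableOn_const measure_ball_lt_top.ne).integrable_indicator measurableSet_ball⟩

lemma integrable_invNormKernelMajorant (hE : 2 ≤ finrank ℝ E) {ρ : E → ℝ} (hρ : Integrable ρ μ)
    (ξ : E) (r B : ℝ) : Integrable (invNormKernelMajorant ξ r B ρ) μ :=
  have h := integrable_invNormKernelMajorant_pieces (μ := μ) hE ξ r B
  (h.1.add h.2).add (hρ.const_mul r⁻¹)

lemma integral_invNormKernelMajorant (hE : 2 ≤ finrank ℝ E) {ρ : E → ℝ} (hρ : Integrable ρ μ)
    (ξ : E) {r : ℝ} (hr : 0 < r) (B : ℝ) :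
    ∫ y, invNormKernelMajorant ξ r B ρ y ∂μ
      = B * ((∫ z in ball 0 1, ‖z‖⁻¹ ∂μ) + r ^ finrank ℝ E * μ.real (ball 0 1))
        + r⁻¹ * ∫ y, ρ y ∂μ := by
  have hball : μ.real (ball ξ r) = r ^ finrank ℝ E * μ.real (ball 0 1) := by
    rw [measureReal_def, Measure.addHaar_ball_of_pos μ ξ hr, ENNReal.toReal_mul,
      ENNReal.toReal_ofReal (by positivity), measureReal_def]
  obtain ⟨h₁, h₂⟩ := integrable_invNormKernelMajorant_pieces (μ := μ) hE ξ r B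
  unfold invNormKernelMajorant
  rw [integral_add (f := fun y => _ + _) (h₁.add h₂) (hρ.const_mul r⁻¹), integral_add h₁ h₂,
    integral_indicator measurableSet_ball, integral_indicator measurableSet_ball,
    integral_const_mul, integral_const_mul, setIntegral_const, setIntegral_ball_inv_norm_sub,
    hball, smul_eq_mul]
  ring

lemma integrable_inv_norm_sub_mul (hE : 2 ≤ finrank ℝ E) {ρ : E → ℝ} (hρ0 : ∀ y, 0 ≤ ρ y)
    (hρ : Integrable ρ μ) {B : ℝ} (hB : ∀ y, ρ y ≤ B) (ξ : E) :
    Integrable (fun y => ‖ξ - y‖⁻¹ * ρ y) μ := by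
  refine (integrable_invNormKernelMajorant hE hρ ξ 1 B).mono'
    ((by fun_prop : Measurable fun y => ‖ξ - y‖⁻¹).aestronglyMeasurable.mul
      hρ.aestronglyMeasurable) (ae_of_all _ fun y => ?_)
  rw [Real.norm_of_nonneg (mul_nonneg (by positivity) (hρ0 y))]
  exact inv_norm_sub_mul_le_invNormKernelMajorant hρ0 one_pos (fun y _ => hB y) y

lemma integral_inv_norm_sub_mul_le (hE : 2 ≤ finrank ℝ E) {ρ : E → ℝ} (hρ0 : ∀ y, 0 ≤ ρ y)
    (hρ : Integrable ρ μ) {ξ : E} {r B : ℝ} (hr : 0 < r)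
    (hB : ∀ y, ‖ξ - y‖ < max 1 r → ρ y ≤ B) :
    ∫ y, ‖ξ - y‖⁻¹ * ρ y ∂μ
      ≤ B * ((∫ z in ball 0 1, ‖z‖⁻¹ ∂μ) + r ^ finrank ℝ E * μ.real (ball 0 1))
        + r⁻¹ * ∫ y, ρ y ∂μ := by
  rw [← integral_invNormKernelMajorant hE hρ ξ hr B]
  exact integral_mono_of_nonneg (ae_of_all _ fun y => mul_nonneg (by positivity) (hρ0 y))
    (integrable_invNormKernelMajorant hE hρ ξ r B)
    (ae_of_all _ (inv_norm_sub_mul_le_invNormKernelMajorant hρ0 hr hB))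

end InverseNormKernel

lemma Real.log_one_add_le_log_two_add_abs_log {t : ℝ} (ht : 0 ≤ t) :
    log (1 + t) ≤ log 2 + |log t| := by
  rcases le_or_gt t 1 with ht1 | ht1
  · linarith [log_le_log (by positivity) (by linarith : 1 + t ≤ 2), abs_nonneg (log t)]
  · calc log (1 + t) ≤ log (2 * t) := log_le_log (by positivity) (by linarith)
      _ = log 2 + log t := log_mul two_ne_zero (by positivity)
      _ ≤ log 2 + |log t| := by linarith [le_abs_self (log t)]

lemma Real.abs_log_le_inv_add_log_one_add {t : ℝ} (ht : 0 ≤ t) :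
    |log t| ≤ t⁻¹ + log (1 + t) := by
  rcases ht.eq_or_lt with rfl | ht
  · simp
  have hlog1 : 0 ≤ log (1 + t) := log_nonneg (by linarith)
  rcases le_or_gt t 1 with ht1 | ht1
  · rw [abs_of_nonpos (log_nonpos ht.le ht1), ← log_inv]
    linarith [log_le_sub_one_of_pos (inv_pos.2 ht)]
  · rw [abs_of_pos (log_pos ht1)]
    linarith [log_le_log ht (by linarith : t ≤ 1 + t), inv_nonneg.2 ht.le]

lemma Real.log_le_log_one_add {t : ℝ} (ht : 0 ≤ t) : log t ≤ log (1 + t) := by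
  rcases ht.eq_or_lt with rfl | ht
  · simp
  · exact log_le_log ht (by linarith)

lemma Real.abs_log_sub_log_le {u v : ℝ} (hu : 0 < u) (hv : 0 < v) :
    |log u - log v| ≤ |u - v| * (u⁻¹ + v⁻¹) := by
  have key : ∀ {u v : ℝ}, 0 < u → 0 < v → log u - log v ≤ |u - v| * (u⁻¹ + v⁻¹) := by
    intro u v hu hv
    calc log u - log v = log (u / v) := (log_div hu.ne' hv.ne').symm
      _ ≤ u / v - 1 := log_le_sub_one_of_pos (div_pos hu hv)
      _ = (u - v) * v⁻¹ := by field_simp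
      _ ≤ |u - v| * (u⁻¹ + v⁻¹) := by
        gcongr
        · exact le_abs_self _
        · linarith [inv_pos.2 hu]
  have key' := key hv hu
  rw [abs_sub_comm, add_comm v⁻¹] at key'
  exact abs_le.2 ⟨by linarith, key hu hv⟩

section LogKernel

variable {E : Type*} [NormedAddCommGroup E]

lemma log_one_add_norm_sub_le (x y : E) :
    log (1 + ‖x - y‖) ≤ log (1 + ‖x‖) + log (1 + ‖y‖) := by
  rw [← log_mul (by positivity) (by positivity)]
  exact log_le_log (by positivity) (by nlinarith [norm_sub_le x y, norm_nonneg x, norm_nonneg y])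

variable [MeasurableSpace E] [BorelSpace E] {μ : Measure E}

lemma integrable_log_one_add_norm_mul {ρ : E → ℝ} (hρ0 : ∀ y, 0 ≤ ρ y) (hρ : Integrable ρ μ)
    {x : E} (hx : Integrable (fun y => log ‖x - y‖ * ρ y) μ) :
    Integrable (fun y => log (1 + ‖y‖) * ρ y) μ := by
  refine ((hρ.const_mul (log (1 + ‖x‖) + log 2)).add hx.norm).mono'
    ((by fun_prop : Measurable fun y : E => log (1 + ‖y‖)).aestronglyMeasurable.mul
      hρ.aestronglyMeasurable) (ae_of_all _ fun y => ?_)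
  have hlog : log (1 + ‖y‖) ≤ log (1 + ‖x‖) + log 2 + |log ‖x - y‖| := by
    have := log_one_add_norm_sub_le x (x - y)
    rw [sub_sub_cancel] at this
    linarith [log_one_add_le_log_two_add_abs_log (norm_nonneg (x - y))]
  have hlog0 : 0 ≤ log (1 + ‖y‖) := log_nonneg (by linarith [norm_nonneg y])
  simp only [Pi.add_apply, norm_mul, Real.norm_eq_abs, abs_of_nonneg (hρ0 y), abs_of_nonneg hlog0]
  nlinarith [hρ0 y]

lemma integrable_log_norm_sub_mul {ρ : E → ℝ} (hρ0 : ∀ y, 0 ≤ ρ y) (hρ : Integrable ρ μ)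
    (hJ : Integrable (fun y => log (1 + ‖y‖) * ρ y) μ) {ξ : E}
    (hinv : Integrable (fun y => ‖ξ - y‖⁻¹ * ρ y) μ) :
    Integrable (fun y => log ‖ξ - y‖ * ρ y) μ := by
  refine ((hinv.add (hρ.const_mul (log (1 + ‖ξ‖)))).add hJ).mono'
    ((by fun_prop : Measurable fun y : E => log ‖ξ - y‖).aestronglyMeasurable.mul
      hρ.aestronglyMeasurable) (ae_of_all _ fun y => ?_)
  have hlog : |log ‖ξ - y‖| ≤ ‖ξ - y‖⁻¹ + log (1 + ‖ξ‖) + log (1 + ‖y‖) := by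
    linarith [abs_log_le_inv_add_log_one_add (norm_nonneg (ξ - y)), log_one_add_norm_sub_le ξ y]
  simp only [Pi.add_apply, norm_mul, Real.norm_eq_abs, abs_of_nonneg (hρ0 y)]
  nlinarith [hρ0 y]

end LogKernel

lemma Continuous.exists_forall_le_of_eventually_le_cocompact {X : Type*} [TopologicalSpace X]
    {f : X → ℝ} (hf : Continuous f) {C : ℝ} (h : ∀ᶠ x in cocompact X, f x ≤ C) :
    ∃ C', ∀ x, f x ≤ C' := by
  obtain ⟨K, hK, hKC⟩ := mem_cocompact.1 h
  obtain ⟨B, hB⟩ := (hK.image hf).bddAbove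
  refine ⟨max C B, fun x => ?_⟩
  by_cases hx : x ∈ K
  · exact (hB (mem_image_of_mem f hx)).trans (le_max_right _ _)
  · exact (hKC hx).trans (le_max_left _ _)

section Confinement

variable {E : Type*} [NormedAddCommGroup E] [ProperSpace E]

lemma exists_exp_neg_le_mul_one_add_norm_rpow {φ : E → ℝ} (hφ : Continuous φ) {a : ℝ}
    (ha : 0 ≤ a) (hlog : ∀ᶠ x in cocompact E, a * log ‖x‖ ≤ φ x) :
    ∃ C, ∀ x, exp (-φ x) ≤ C * (1 + ‖x‖) ^ (-a) := by
  have hg : ∀ᶠ x in cocompact E, exp (-φ x) * (1 + ‖x‖) ^ a ≤ 2 ^ a := by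
    filter_upwards [hlog, tendsto_norm_cocompact_atTop.eventually_ge_atTop 1] with x hx hx1
    have hx0 : 0 < ‖x‖ := by linarith
    calc exp (-φ x) * (1 + ‖x‖) ^ a ≤ ‖x‖ ^ (-a) * (2 * ‖x‖) ^ a := by
          gcongr
          · rw [rpow_def_of_pos hx0]
            exact exp_le_exp.2 (by linarith)
          · linarith
      _ = 2 ^ a := by
          rw [mul_rpow zero_le_two hx0.le, rpow_neg hx0.le]
          field_simp
  obtain ⟨C, hC⟩ := (by fun_prop : Continuous fun x => exp (-φ x) * (1 + ‖x‖) ^ a)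
    |>.exists_forall_le_of_eventually_le_cocompact hg
  refine ⟨C, fun x => ?_⟩
  have h1 : 0 < 1 + ‖x‖ := by positivity
  calc exp (-φ x) = exp (-φ x) * (1 + ‖x‖) ^ a * (1 + ‖x‖) ^ (-a) := by
        rw [mul_assoc, ← rpow_add h1, add_neg_cancel, rpow_zero, mul_one]
    _ ≤ C * (1 + ‖x‖) ^ (-a) := by gcongr; exact hC x

lemma exists_exp_neg_le {φ : E → ℝ} (hφ : Continuous φ) {a : ℝ} (ha : 0 ≤ a)
    (hlog : ∀ᶠ x in cocompact E, a * log ‖x‖ ≤ φ x) : ∃ C, ∀ x, exp (-φ x) ≤ C := by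
  obtain ⟨C, hC⟩ := exists_exp_neg_le_mul_one_add_norm_rpow hφ ha hlog
  refine ⟨C, fun x => ?_⟩
  have hpos : 0 < (1 + ‖x‖) ^ (-a) := by positivity
  have hC0 : 0 ≤ C := le_of_lt <| pos_of_mul_pos_left ((exp_pos _).trans_le (hC x)) hpos.le
  exact (hC x).trans (mul_le_of_le_one_right hC0
    (rpow_le_one_of_one_le_of_nonpos (by linarith [norm_nonneg x]) (by linarith)))

end Confinement

section GradientBounds

variable {E : Type*} [NormedAddCommGroup E] [InnerProductSpace ℝ E] [CompleteSpace E]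

lemma norm_gradient_le_of_lip' {f : E → ℝ} {x₀ : E} {C : ℝ} (hC : 0 ≤ C)
    (hlip : ∀ᶠ x in 𝓝 x₀, ‖f x - f x₀‖ ≤ C * ‖x - x₀‖) : ‖gradient f x₀‖ ≤ C := by
  rw [gradient, LinearIsometryEquiv.norm_map]
  exact norm_fderiv_le_of_lip' ℝ hC hlip

lemma measurable_gradient [FiniteDimensional ℝ E] [MeasurableSpace E] [BorelSpace E]
    (f : E → ℝ) : Measurable (gradient f) :=
  (InnerProductSpace.toDual ℝ E).symm.continuous.measurable.comp (measurable_fderiv ℝ f)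

end GradientBounds

section Decay

variable {E : Type*} [NormedAddCommGroup E] [NormedSpace ℝ E] [FiniteDimensional ℝ E]
  [MeasurableSpace E] [BorelSpace E] {μ : Measure E} [μ.IsAddHaarMeasure]

lemma memLp_of_norm_le_mul_inv_one_add_norm {F : Type*} [NormedAddCommGroup F] {f : E → F}
    (hf : AEStronglyMeasurable f μ) {K : ℝ} (hfK : ∀ x, ‖f x‖ ≤ K * (1 + ‖x‖)⁻¹)
    {q : ℝ≥0∞} (hq : (finrank ℝ E : ℝ≥0∞) < q) : MemLp f q μ := by
  have hK : 0 ≤ K :=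
    nonneg_of_mul_nonneg_left ((norm_nonneg _).trans (hfK 0)) (by positivity)
  rcases eq_or_ne q ∞ with rfl | hq_top
  · exact memLp_top_of_bound hf K (ae_of_all _ fun x => (hfK x).trans
      (mul_le_of_le_one_right hK (inv_le_one_of_one_le₀ (by linarith [norm_nonneg x]))))
  have hqr : (finrank ℝ E : ℝ) < q.toReal := by
    simpa using ENNReal.toReal_strict_mono hq_top hq
  refine (integrable_norm_rpow_iff hf (hq.trans_le' bot_le).ne' hq_top).1 <|
    ((integrable_one_add_norm hqr).const_mul (K ^ q.toReal)).mono'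
      (hf.norm.aemeasurable.pow_const _).aestronglyMeasurable (ae_of_all _ fun x => ?_)
  rw [Real.norm_of_nonneg (by positivity)]
  calc ‖f x‖ ^ q.toReal ≤ (K * (1 + ‖x‖)⁻¹) ^ q.toReal :=
        rpow_le_rpow (norm_nonneg _) (hfK x) ENNReal.toReal_nonneg
    _ = K ^ q.toReal * (1 + ‖x‖) ^ (-q.toReal) := by
        rw [mul_rpow hK (by positivity), inv_rpow (by positivity), rpow_neg (by positivity)]

omit [NormedSpace ℝ E] [FiniteDimensional ℝ E] [MeasurableSpace E] [BorelSpace E] in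
lemma one_add_norm_le_of_norm_sub_lt {x ξ y : E} (hxξ : ‖x - ξ‖ < 1)
    (hξy : ‖ξ - y‖ < max 1 ((1 + ‖x‖) / 2)) : 1 + ‖x‖ ≤ 6 * (1 + ‖y‖) := by
  have htri : ‖x‖ ≤ ‖x - ξ‖ + ‖ξ - y‖ + ‖y‖ := by
    calc ‖x‖ = ‖(x - ξ) + (ξ - y) + y‖ := by abel_nf
      _ ≤ _ := norm_add₃_le
  have hmax : max 1 ((1 + ‖x‖) / 2) ≤ 1 + (1 + ‖x‖) / 2 :=
    max_le (by linarith [norm_nonneg x]) (by linarith)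
  linarith [norm_nonneg y]

lemma exists_integral_inv_norm_sub_mul_le (hE : 2 ≤ finrank ℝ E) {ρ : E → ℝ}
    (hρ0 : ∀ y, 0 ≤ ρ y) (hρ : Integrable ρ μ) {C b : ℝ} (hb : (finrank ℝ E : ℝ) + 1 ≤ b)
    (hdecay : ∀ y, ρ y ≤ C * (1 + ‖y‖) ^ (-b)) :
    ∃ K, ∀ x ξ : E, ‖x - ξ‖ < 1 → ∫ y, ‖ξ - y‖⁻¹ * ρ y ∂μ ≤ K * (1 + ‖x‖)⁻¹ := by
  set A := ∫ z in ball (0 : E) 1, ‖z‖⁻¹ ∂μ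
  set V := μ.real (ball (0 : E) 1)
  set n := finrank ℝ E
  have hA : 0 ≤ A := setIntegral_nonneg measurableSet_ball fun _ _ => by positivity
  have hV : 0 ≤ V := measureReal_nonneg
  have hm : 0 ≤ ∫ y, ρ y ∂μ := integral_nonneg hρ0
  have hC : 0 ≤ C := by simpa using (hρ0 0).trans (hdecay 0)
  have hb1 : 1 ≤ b := by linarith [(Nat.cast_nonneg n : (0:ℝ) ≤ n)]
  refine ⟨C * 6 ^ b * (A + V) + 2 * ∫ y, ρ y ∂μ, fun x ξ hxξ => ?_⟩
  set X := 1 + ‖x‖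
  have hX : 1 ≤ X := by linarith [norm_nonneg x]
  have hX0 : 0 < X := by linarith
  have hB : ∀ y, ‖ξ - y‖ < max 1 (X / 2) → ρ y ≤ C * 6 ^ b * X ^ (-b) := fun y hy => by
    have h6 : X / 6 ≤ 1 + ‖y‖ := by linarith [one_add_norm_le_of_norm_sub_lt hxξ hy]
    calc ρ y ≤ C * (1 + ‖y‖) ^ (-b) := hdecay y
      _ ≤ C * (X / 6) ^ (-b) :=
          mul_le_mul_of_nonneg_left (rpow_le_rpow_of_nonpos (by positivity) h6 (by linarith)) hC
      _ = C * 6 ^ b * X ^ (-b) := by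
          rw [div_rpow hX0.le (by norm_num), rpow_neg (by norm_num : (0:ℝ) ≤ 6)]
          field_simp
  have hXb : X ^ (-b) ≤ X⁻¹ := by
    rw [← rpow_neg_one]
    exact rpow_le_rpow_of_exponent_le hX (by linarith)
  have hXbn : X ^ (-b) * (X / 2) ^ n ≤ X⁻¹ := by
    calc X ^ (-b) * (X / 2) ^ n ≤ X ^ (-b) * X ^ n := by
          gcongr
          linarith
      _ = X ^ (-b + n) := by rw [rpow_add hX0, rpow_natCast]
      _ ≤ X⁻¹ := by
          rw [← rpow_neg_one]
          exact rpow_le_rpow_of_exponent_le hX (by linarith)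
  calc ∫ y, ‖ξ - y‖⁻¹ * ρ y ∂μ
      ≤ C * 6 ^ b * X ^ (-b) * (A + (X / 2) ^ n * V) + (X / 2)⁻¹ * ∫ y, ρ y ∂μ :=
        integral_inv_norm_sub_mul_le hE hρ0 hρ (by positivity) hB
    _ = C * 6 ^ b * (X ^ (-b) * A + X ^ (-b) * (X / 2) ^ n * V) + 2 * (∫ y, ρ y ∂μ) * X⁻¹ := by
        field_simp
    _ ≤ C * 6 ^ b * (X⁻¹ * A + X⁻¹ * V) + 2 * (∫ y, ρ y ∂μ) * X⁻¹ := by gcongr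
    _ = (C * 6 ^ b * (A + V) + 2 * ∫ y, ρ y ∂μ) * X⁻¹ := by ring

end Decay

lemma lap_zero {d : ℕ} (x : Euc d) : lap (fun _ : Euc d => (0 : ℝ)) x = 0 := by
  have hpd : ∀ i, pd i (fun _ : Euc d => (0 : ℝ)) = fun _ => 0 := fun i => funext fun y => by
    simp [pd]
  simp [lap, hpd]

lemma newt_two_eq (ρ : Euc 2 → ℝ) (x : Euc 2) :
    newt 2 ρ x = -(2 * π)⁻¹ * ∫ y, log ‖x - y‖ * ρ y := by
  rw [newt, ← integral_const_mul]
  congr 1 with y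
  rw [Gker, if_pos rfl]
  ring

lemma newt_three_eq (ρ : Euc 3 → ℝ) (x : Euc 3) :
    newt 3 ρ x = (4 * π)⁻¹ * ∫ y, ‖x - y‖⁻¹ * ρ y := by
  rw [newt, ← integral_const_mul]
  congr 1 with y
  simp only [Gker, if_neg (by norm_num : (3 : ℕ) ≠ 2), one_div, mul_inv]
  ring

section ThreeDimensional

variable {ρ : Euc 3 → ℝ}

lemma newt_three_nonneg (hρ0 : ∀ y, 0 ≤ ρ y) (x : Euc 3) : 0 ≤ newt 3 ρ x := by
  rw [newt_three_eq]
  exact mul_nonneg (by positivity) (integral_nonneg fun y => mul_nonneg (by positivity) (hρ0 y))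

lemma newt_three_le (hρ0 : ∀ y, 0 ≤ ρ y) (hρ : Integrable ρ) {B : ℝ} (hB : ∀ y, ρ y ≤ B)
    (x : Euc 3) :
    newt 3 ρ x ≤ (4 * π)⁻¹ * (B * ((∫ z in ball (0 : Euc 3) 1, ‖z‖⁻¹)
      + volume.real (ball (0 : Euc 3) 1)) + ∫ y, ρ y) := by
  rw [newt_three_eq]
  gcongr
  simpa using integral_inv_norm_sub_mul_le (by simp) hρ0 hρ (ξ := x) one_pos fun y _ => hB y

lemma steadyState_potential_three_bounded {c Cφ : ℝ} {φ nS cS : Euc 3 → ℝ} (hc : 0 < c)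
    (hφ : ∀ x, exp (-φ x) ≤ Cφ) (hcS : ∀ x, cS x = newt 3 nS x)
    (hnS : ∀ x, nS x = c * exp (-cS x - φ x)) (hint : Integrable nS) :
    ∃ K, ∀ x, 0 ≤ cS x ∧ cS x ≤ K := by
  have hn0 : ∀ y, 0 ≤ nS y := fun y => by rw [hnS]; positivity
  have hc0 : ∀ x, 0 ≤ cS x := fun x => hcS x ▸ newt_three_nonneg hn0 x
  have hnB : ∀ y, nS y ≤ c * Cφ := fun y => by
    calc nS y = c * (exp (-cS y) * exp (-φ y)) := by rw [hnS, sub_eq_add_neg, exp_add]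
      _ ≤ c * (1 * Cφ) := by
          gcongr
          exacts [exp_le_one_iff.2 (neg_nonpos.2 (hc0 y)), hφ y]
      _ = c * Cφ := by ring
  exact ⟨_, fun x => ⟨hc0 x, hcS x ▸ newt_three_le hn0 hint hnB x⟩⟩

end ThreeDimensional

section TwoDimensional

variable {ρ : Euc 2 → ℝ}

lemma neg_le_newt_two (hρ0 : ∀ y, 0 ≤ ρ y) (hρ : Integrable ρ)
    (hJ : Integrable fun y => log (1 + ‖y‖) * ρ y) (x : Euc 2) :
    -(2 * π)⁻¹ * (log (1 + ‖x‖) * (∫ y, ρ y) + ∫ y, log (1 + ‖y‖) * ρ y) ≤ newt 2 ρ x := by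
  rw [newt_two_eq]
  refine mul_le_mul_of_nonpos_left ?_ (neg_nonpos.2 (by positivity))
  have hlog : ∀ z : Euc 2, 0 ≤ log (1 + ‖z‖) := fun z => log_nonneg (by linarith [norm_nonneg z])
  by_cases hk : Integrable fun y => log ‖x - y‖ * ρ y
  · rw [← integral_const_mul, ← integral_add (hρ.const_mul _) hJ]
    refine integral_mono hk ((hρ.const_mul _).add hJ) fun y => ?_
    have := (log_le_log_one_add (norm_nonneg (x - y))).trans (log_one_add_norm_sub_le x y)
    nlinarith [hρ0 y]
  · rw [integral_undef hk]
    exact add_nonneg (mul_nonneg (hlog x) (integral_nonneg hρ0))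
      (integral_nonneg fun y => mul_nonneg (hlog y) (hρ0 y))

lemma abs_newt_two_sub_le (hρ0 : ∀ y, 0 ≤ ρ y) {ξ x : Euc 2}
    (hlogξ : Integrable fun y => log ‖ξ - y‖ * ρ y) (hlogx : Integrable fun y => log ‖x - y‖ * ρ y)
    (hinvξ : Integrable fun y => ‖ξ - y‖⁻¹ * ρ y) (hinvx : Integrable fun y => ‖x - y‖⁻¹ * ρ y) :
    |newt 2 ρ ξ - newt 2 ρ x|
      ≤ (2 * π)⁻¹ * (‖ξ - x‖ * ((∫ y, ‖ξ - y‖⁻¹ * ρ y) + ∫ y, ‖x - y‖⁻¹ * ρ y)) := by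
  rw [newt_two_eq, newt_two_eq, ← mul_sub, abs_mul, abs_neg, abs_of_pos (by positivity),
    ← integral_sub hlogξ hlogx, ← integral_add hinvξ hinvx, ← integral_const_mul]
  gcongr
  rw [← Real.norm_eq_abs]
  refine norm_integral_le_of_norm_le ((hinvξ.add hinvx).const_mul _) ?_
  filter_upwards [volume.ae_ne ξ, volume.ae_ne x] with y hyξ hyx
  have hlog := abs_log_sub_log_le (norm_pos_iff.2 (sub_ne_zero.2 hyξ.symm))
    (norm_pos_iff.2 (sub_ne_zero.2 hyx.symm))
  have hnorm : |‖ξ - y‖ - ‖x - y‖| ≤ ‖ξ - x‖ := by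
    simpa using abs_norm_sub_norm_le (ξ - y) (x - y)
  rw [← sub_mul, Real.norm_eq_abs, abs_mul, abs_of_nonneg (hρ0 y)]
  calc |log ‖ξ - y‖ - log ‖x - y‖| * ρ y ≤ ‖ξ - x‖ * (‖ξ - y‖⁻¹ + ‖x - y‖⁻¹) * ρ y := by
        gcongr
        exacts [hρ0 y, hlog.trans (by gcongr)]
    _ = _ := by ring

lemma norm_gradient_newt_two_le (hρ0 : ∀ y, 0 ≤ ρ y)
    (hlog : ∀ ξ, Integrable fun y => log ‖ξ - y‖ * ρ y)
    (hinv : ∀ ξ, Integrable fun y => ‖ξ - y‖⁻¹ * ρ y) {K : ℝ}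
    (hK : ∀ x ξ, ‖x - ξ‖ < 1 → ∫ y, ‖ξ - y‖⁻¹ * ρ y ≤ K * (1 + ‖x‖)⁻¹) (x : Euc 2) :
    ‖gradient (newt 2 ρ) x‖ ≤ K / π * (1 + ‖x‖)⁻¹ := by
  have hK0 : 0 ≤ K := nonneg_of_mul_nonneg_left
    ((integral_nonneg fun y => mul_nonneg (by positivity) (hρ0 y)).trans (hK x x (by simp)))
    (by positivity)
  refine norm_gradient_le_of_lip' (by positivity) ?_
  filter_upwards [ball_mem_nhds x one_pos] with ξ hξ
  rw [mem_ball, dist_eq_norm, ← norm_sub_rev] at hξ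
  rw [Real.norm_eq_abs]
  calc |newt 2 ρ ξ - newt 2 ρ x|
      ≤ (2 * π)⁻¹ * (‖ξ - x‖ * (K * (1 + ‖x‖)⁻¹ + K * (1 + ‖x‖)⁻¹)) := by
        refine (abs_newt_two_sub_le hρ0 (hlog ξ) (hlog x) (hinv ξ) (hinv x)).trans ?_
        gcongr
        exacts [hK x ξ hξ, hK x x (by simp)]
    _ = K / π * (1 + ‖x‖)⁻¹ * ‖ξ - x‖ := by field_simp; ring

lemma steadyState_density_two_le {M c Cφ a : ℝ} {φ nS cS : Euc 2 → ℝ} (hc : 0 < c)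
    (hφ : ∀ x, exp (-φ x) ≤ Cφ * (1 + ‖x‖) ^ (-a)) (hcS : ∀ x, cS x = newt 2 nS x)
    (hnS : ∀ x, nS x = c * exp (-cS x - φ x)) (hint : Integrable nS) (hmass : ∫ x, nS x = M)
    (hJ : Integrable fun y => log (1 + ‖y‖) * nS y) :
    ∃ C, ∀ y, nS y ≤ C * (1 + ‖y‖) ^ (-(a - M / (2 * π))) := by
  have hn0 : ∀ y, 0 ≤ nS y := fun y => by rw [hnS]; positivity
  set J := ∫ y, log (1 + ‖y‖) * nS y
  refine ⟨c * Cφ * exp (J / (2 * π)), fun y => ?_⟩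
  have hX : 0 < 1 + ‖y‖ := by positivity
  have hcy : -cS y ≤ (2 * π)⁻¹ * (M * log (1 + ‖y‖) + J) := by
    have := hcS y ▸ neg_le_newt_two hn0 hint hJ y
    rw [hmass] at this
    linarith
  have hexp : exp ((2 * π)⁻¹ * (M * log (1 + ‖y‖) + J))
      = (1 + ‖y‖) ^ (M / (2 * π)) * exp (J / (2 * π)) := by
    rw [rpow_def_of_pos hX, ← exp_add]
    congr 1
    ring
  calc nS y = c * exp (-cS y) * exp (-φ y) := by rw [hnS, sub_eq_add_neg, exp_add, mul_assoc]
    _ ≤ c * exp ((2 * π)⁻¹ * (M * log (1 + ‖y‖) + J)) * (Cφ * (1 + ‖y‖) ^ (-a)) := by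
        gcongr
        exact hφ y
    _ = c * Cφ * exp (J / (2 * π)) * ((1 + ‖y‖) ^ (M / (2 * π)) * (1 + ‖y‖) ^ (-a)) := by
        rw [hexp]
        ring
    _ = c * Cφ * exp (J / (2 * π)) * (1 + ‖y‖) ^ (-(a - M / (2 * π))) := by
        rw [← rpow_add hX]
        ring_nf

end TwoDimensional

lemma steadyState_gradient_two_memLp {M c Cφ a : ℝ} {φ nS cS : Euc 2 → ℝ} (hc : 0 < c)
    (ha : 3 + M / (2 * π) ≤ a) (hφ : ∀ x, exp (-φ x) ≤ Cφ * (1 + ‖x‖) ^ (-a))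
    (hcS : ∀ x, cS x = newt 2 nS x) (hlap : ∀ x, -lap cS x = nS x)
    (hnS : ∀ x, nS x = c * exp (-cS x - φ x)) (hint : Integrable nS) (hmass : ∫ x, nS x = M)
    {q : ℝ≥0∞} (hq : 2 < q) : MemLp (gradient cS) q volume := by
  have hpos : ∀ y, 0 < nS y := fun y => by rw [hnS]; positivity
  have hn0 : ∀ y, 0 ≤ nS y := fun y => (hpos y).le
  have hE : finrank ℝ (Euc 2) = 2 := finrank_euclideanSpace_fin
  have hJ : Integrable fun y => log (1 + ‖y‖) * nS y := by
    by_contra hJ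
    -- A divergent Bochner integral is `0`, so `cS` would vanish identically, and so would `nS`.
    have hc0 : cS = fun _ => 0 := funext fun x => by
      rw [hcS, newt_two_eq, integral_undef (mt (integrable_log_one_add_norm_mul hn0 hint) hJ),
        mul_zero]
    have := hlap 0
    rw [hc0, lap_zero, neg_zero] at this
    exact (hpos 0).ne this
  obtain ⟨C, hC⟩ := steadyState_density_two_le hc hφ hcS hnS hint hmass hJ
  have hbdd : ∀ y, nS y ≤ C := fun y => by
    have hC0 : 0 ≤ C := by simpa using (hn0 0).trans (hC 0)
    exact (hC y).trans (mul_le_of_le_one_right hC0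
      (rpow_le_one_of_one_le_of_nonpos (by linarith [norm_nonneg y]) (by linarith)))
  obtain ⟨K, hK⟩ := exists_integral_inv_norm_sub_mul_le (μ := volume) hE.ge hn0 hint
    (by rw [hE]; linarith) hC
  have hinv := integrable_inv_norm_sub_mul (μ := volume) hE.ge hn0 hint hbdd
  have hgrad := norm_gradient_newt_two_le hn0
    (fun ξ => integrable_log_norm_sub_mul hn0 hint hJ (hinv ξ)) hinv hK
  rw [funext hcS]
  exact memLp_of_norm_le_mul_inv_one_add_norm (measurable_gradient _).aestronglyMeasurable hgrad
    (by rwa [hE])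

theorem steadyState_potential_bounds_general
    (d : ℕ) (M : ℝ) (hM : 0 < M)
    (φ : Euc d → ℝ) (hφ : ConfC d M φ)
    (nS cS : Euc d → ℝ) (hsteady : IsSteadyState d M φ nS cS) :
    (d = 3 → ∃ K : ℝ, ∀ x, 0 ≤ cS x ∧ cS x ≤ K)
    ∧ (d = 2 → ∀ q : ℝ≥0∞, 2 < q → MemLp (fun x => gradient cS x) q volume) := by
  obtain ⟨hcS, hlap, hnS⟩ := hsteady
  set I := ∫ y, exp (-cS y - φ y)
  by_cases hI : I = 0
  -- With `x / 0 = 0`, a vanishing normalisation makes `nS`, hence `cS`, identically zero.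
  · have hc0 : cS = fun _ => 0 := funext fun x => by simp [hcS x, newt, hnS, hI]
    exact ⟨fun _ => ⟨0, fun x => by simp [hc0]⟩, fun _ q _ => by simp [hc0]⟩
  have hIint : Integrable fun y => exp (-cS y - φ y) := by
    by_contra h
    exact hI (integral_undef h)
  have hc : 0 < M / I := div_pos hM ((integral_nonneg fun _ => (exp_pos _).le).lt_of_ne' hI)
  have hnS' : ∀ x, nS x = M / I * exp (-cS x - φ x) := fun x => by rw [hnS]; ring
  have hint : Integrable nS := funext hnS' ▸ hIint.const_mul (M / I)
  have hmass : ∫ x, nS x = M := by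
    rw [funext hnS', integral_const_mul, div_mul_cancel₀ M hI]
  obtain ⟨hφd, -, -, ⟨a, hda, hlog⟩, -, -, hC4⟩ := hφ
  refine ⟨?_, ?_⟩
  · rintro rfl
    obtain ⟨C, hC⟩ := exists_exp_neg_le hφd.continuous (by linarith) hlog
    exact steadyState_potential_three_bounded hc hC hcS hnS' hint
  · rintro rfl _ hq
    obtain ⟨a, ha, hlog⟩ := hC4 rfl
    have hMπ : 0 < M / (2 * π) := by positivity
    obtain ⟨C, hC⟩ := exists_exp_neg_le_mul_one_add_norm_rpow hφd.continuous (by linarith) hlog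
    exact steadyState_gradient_two_memLp hc (by linarith) hC hcS hlap hnS' hint hmass hq

/-- Regularity of the stationary solution: `c∞` is bounded (and nonnegative) if `d = 3`,
and `∇c∞ ∈ L^q(ℝ²)` for every `q ∈ (2, +∞]` if `d = 2`. -/
theorem steadyState_potential_bounds
    (d : ℕ) (hd : d = 2 ∨ d = 3) (M : ℝ) (hM : 0 < M)
    (φ : Euc d → ℝ) (hφ : ConfC d M φ)
    (nS cS : Euc d → ℝ) (hsteady : IsSteadyState d M φ nS cS) :
    (d = 3 → ∃ K : ℝ, ∀ x, 0 ≤ cS x ∧ cS x ≤ K)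
    ∧ (d = 2 → ∀ q : ℝ≥0∞, 2 < q → MemLp (fun x => gradient cS x) q volume) :=
  steadyState_potential_bounds_general d M hM φ hφ nS cS hsteady
end
end

section
/- Let μ > 0 and let Φ : (0, ∞) → ℝ be a twice differentiable function satisfying Φ''(s) + (μ/2) Φ'(s) − (1/(2s)) Φ(s) Φ'(s) = 0 for all s > 0. Then the function φ(s) := s Φ'(s) satisfies the linearized equation φ''(s) + ((μ s − Φ(s))/(2s)) φ'(s) + ((λ − 2 Φ'(s))/(4s)) φ(s) = 0 for all s > 0 with λ = 2μ; that is, λ = 2μ is an eigenvalue of the linearized operator in the radial cumulated-density formulation. -/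
open Set Filter Topology

/-!
Write `φ = s Φ'`, so that `φ' = Φ' + s Φ''` and `φ'' = 2 Φ'' + s Φ'''`. The equation solves for
`Φ'' = (Φ / (2s) - μ/2) Φ'` near every `s > 0`, and differentiating that identity expresses
`Φ'''` through `Φ, Φ', Φ''`. Substituting both, the linearized expression with `λ = 2μ` becomes
a rational function of `s, Φ, Φ'` that vanishes identically.
-/

section
variable {g : ℝ → ℝ} {x : ℝ}

theorem deriv_id_mul (hg : DifferentiableAt ℝ g x) :
    deriv (fun r => r * g r) x = g x + x * deriv g x := by
  rw [deriv_fun_mul differentiableAt_fun_id hg, deriv_id'', one_mul]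

theorem deriv_deriv_id_mul (hg : ∀ᶠ r in 𝓝 x, DifferentiableAt ℝ g r)
    (hg' : DifferentiableAt ℝ (deriv g) x) :
    deriv (deriv (fun r => r * g r)) x = 2 * deriv g x + x * deriv (deriv g) x := by
  have hderiv : deriv (fun r => r * g r) =ᶠ[𝓝 x] fun r => g r + r * deriv g r :=
    hg.mono fun r hr => deriv_id_mul hr
  rw [hderiv.deriv_eq, deriv_fun_add hg.self_of_nhds (differentiableAt_fun_id.fun_mul hg'),
    deriv_id_mul hg']
  ring

end

theorem deriv_deriv_deriv_of_eventuallyEq {μ s : ℝ} {Φ : ℝ → ℝ} (hs : s ≠ 0)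
    (hΦ : DifferentiableAt ℝ Φ s) (hΦ' : DifferentiableAt ℝ (deriv Φ) s)
    (hode : deriv (deriv Φ) =ᶠ[𝓝 s] fun r => (Φ r / (2 * r) - μ / 2) * deriv Φ r) :
    deriv (deriv (deriv Φ)) s = (deriv Φ s / (2 * s) - Φ s / (2 * s ^ 2)) * deriv Φ s
      + (Φ s / (2 * s) - μ / 2) * deriv (deriv Φ) s := by
  have hcoef : HasDerivAt (fun r => Φ r / (2 * r) - μ / 2)
      (deriv Φ s / (2 * s) - Φ s / (2 * s ^ 2)) s :=
    ((hΦ.hasDerivAt.fun_div ((hasDerivAt_id' s).const_mul 2) (by simpa using hs)).sub_const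
      (μ / 2)).congr_deriv (by field_simp)
  rw [hode.deriv_eq, (hcoef.fun_mul hΦ'.hasDerivAt).deriv]

theorem eigenvalue_two_mu_radial_general
    (μ lam : ℝ) (hlam : lam = 2 * μ)
    (Φ : ℝ → ℝ) (hreg : ContDiffOn ℝ 3 Φ (Ioi 0))
    (hODE : ∀ s > (0:ℝ),
      deriv (deriv Φ) s + μ / 2 * deriv Φ s - 1 / (2 * s) * Φ s * deriv Φ s = 0) :
    ∀ s > (0:ℝ),
      deriv (deriv (fun r => r * deriv Φ r)) s
        + (μ * s - Φ s) / (2 * s) * deriv (fun r => r * deriv Φ r) s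
        + (lam - 2 * deriv Φ s) / (4 * s) * (s * deriv Φ s) = 0 := by
  intro s hs
  have hpos : ∀ᶠ r in 𝓝 s, 0 < r := Ioi_mem_nhds hs
  have hreg' : ContDiffOn ℝ 2 (deriv Φ) (Ioi 0) := hreg.deriv_of_isOpen isOpen_Ioi (by norm_num)
  have hreg'' : ContDiffOn ℝ 1 (deriv (deriv Φ)) (Ioi 0) :=
    hreg'.deriv_of_isOpen isOpen_Ioi (by norm_num)
  have hdiff : DifferentiableAt ℝ Φ s :=
    (hreg.differentiableOn (by norm_num)).differentiableAt (Ioi_mem_nhds hs)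
  have hdiff' : ∀ᶠ r in 𝓝 s, DifferentiableAt ℝ (deriv Φ) r := hpos.mono fun r hr =>
    (hreg'.differentiableOn (by norm_num)).differentiableAt (Ioi_mem_nhds hr)
  have hdiff'' : DifferentiableAt ℝ (deriv (deriv Φ)) s :=
    (hreg''.differentiableOn one_ne_zero).differentiableAt (Ioi_mem_nhds hs)
  have hode : deriv (deriv Φ) =ᶠ[𝓝 s] fun r => (Φ r / (2 * r) - μ / 2) * deriv Φ r :=
    hpos.mono fun r hr => by linear_combination hODE r hr
  rw [deriv_deriv_id_mul hdiff' hdiff'', deriv_id_mul hdiff'.self_of_nhds,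
    deriv_deriv_deriv_of_eventuallyEq hs.ne' hdiff hdiff'.self_of_nhds hode,
    hode.self_of_nhds, hlam]
  field_simp
  ring

/-- If `Φ` solves the cumulated-density ODE `Φ'' + (μ/2)Φ' − (1/(2s))ΦΦ' = 0` on `(0,∞)`,
then `φ(s) = s Φ'(s)` solves the linearized equation
`φ'' + ((μs − Φ)/(2s))φ' + ((λ − 2Φ')/(4s))φ = 0` with `λ = 2μ`:
`λ = 2μ` is an eigenvalue of the linearized operator in the radial cumulated-density
formulation. -/
theorem eigenvalue_two_mu_radial
    (μ lam : ℝ) (hμ : 0 < μ) (hlam : lam = 2 * μ)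
    (Φ : ℝ → ℝ) (hreg : ContDiffOn ℝ 3 Φ (Ioi 0))
    (hODE : ∀ s > (0:ℝ),
      deriv (deriv Φ) s + μ / 2 * deriv Φ s - 1 / (2 * s) * Φ s * deriv Φ s = 0) :
    ∀ s > (0:ℝ),
      deriv (deriv (fun r => r * deriv Φ r)) s
        + (μ * s - Φ s) / (2 * s) * deriv (fun r => r * deriv Φ r) s
        + (lam - 2 * deriv Φ s) / (4 * s) * (s * deriv Φ s) = 0 :=
  eigenvalue_two_mu_radial_general μ lam hlam Φ hreg hODE
end

section
/- Let μ > 0 and let n_∞, c_∞ : (0, ∞) → ℝ be twice (respectively three times) differentiable radial profiles satisfying −c_∞''(r) − c_∞'(r)/r = n_∞(r) and n_∞'(r) + (μ r + c_∞'(r)) n_∞(r) = 0 for all r > 0. Then the functions f(r) := μ r + c_∞'(r) and G(r) := −c_∞'(r) satisfy, for all r > 0, the k = 1 spherical-harmonics eigenvalue system: −f'' − f'/r + f/r² + (μ r + c_∞')(f' + G') + n_∞ f = μ f and −G'' − G'/r + G/r² = n_∞ f; that is, λ = μ is an eigenvalue on the first non-radial mode. -/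
/-!
Writing `Δₖ F = F'' + F'/r − k² F/r²` for the radial Laplacian on the `k`-th mode, one has the
commutation `(Δ₀ F)' = Δ₁ (F')`. Differentiating the Poisson equation `Δ₀ c∞ = −n∞` and using the
force balance therefore gives `Δ₁ (c∞') = −n∞' = n∞ f`. Since `r` is `Δ₁`-harmonic, `f = μr + c∞'`
and `G = −c∞'` have `Δ₁ f = −Δ₁ G = n∞ f`, and `f' + G' = μ` turns the transport term into `μ f`.
-/

open Set Filter Topology

noncomputable def radialLaplacian (k : ℕ) (F : ℝ → ℝ) (r : ℝ) : ℝ :=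
  deriv (deriv F) r + deriv F r / r - (k : ℝ) ^ 2 * F r / r ^ 2

theorem deriv_radialLaplacian_zero {F : ℝ → ℝ} {r : ℝ} (hr : r ≠ 0)
    (hF₁ : DifferentiableAt ℝ (deriv F) r) (hF₂ : DifferentiableAt ℝ (deriv (deriv F)) r) :
    deriv (radialLaplacian 0 F) r = radialLaplacian 1 (deriv F) r := by
  have hΔ₀ : radialLaplacian 0 F = fun s => deriv (deriv F) s + deriv F s / s := by
    funext s
    simp [radialLaplacian]
  rw [hΔ₀, deriv_fun_add (g := fun s => deriv F s / s) hF₂ (hF₁.div differentiableAt_fun_id hr),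
    deriv_fun_div hF₁ differentiableAt_fun_id hr]
  simp only [radialLaplacian, deriv_id'', Nat.cast_one, one_pow, one_mul]
  field_simp
  ring

theorem radialLaplacian_neg (k : ℕ) (F : ℝ → ℝ) (r : ℝ) :
    radialLaplacian k (fun s => -F s) r = -radialLaplacian k F r := by
  simp only [radialLaplacian, deriv.fun_neg']
  ring

theorem deriv_linear_add {u : ℝ → ℝ} {r : ℝ} (a : ℝ) (hu : DifferentiableAt ℝ u r) :
    deriv (fun s => a * s + u s) r = a + deriv u r := by
  rw [deriv_fun_add (by fun_prop) hu, deriv_const_mul_field, deriv_id'', mul_one]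

theorem radialLaplacian_one_linear_add {u : ℝ → ℝ} {r : ℝ} (a : ℝ) (hr : r ≠ 0)
    (hu : ∀ᶠ s in 𝓝 r, DifferentiableAt ℝ u s) :
    radialLaplacian 1 (fun s => a * s + u s) r = radialLaplacian 1 u r := by
  have hderiv : deriv (fun s => a * s + u s) =ᶠ[𝓝 r] fun s => a + deriv u s :=
    hu.mono fun s hs => deriv_linear_add a hs
  simp only [radialLaplacian, hderiv.deriv_eq, deriv_const_add, deriv_linear_add a hu.self_of_nhds]
  field_simp
  ring

theorem eigenvalue_mu_first_mode_general
    (μ : ℝ)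
    (nS cS : ℝ → ℝ)
    (hcreg : ContDiffOn ℝ 3 cS (Ioi 0))
    (hPoisson : ∀ r > (0:ℝ), -deriv (deriv cS) r - deriv cS r / r = nS r)
    (hForce : ∀ r > (0:ℝ), deriv nS r + (μ * r + deriv cS r) * nS r = 0) :
    ∀ r > (0:ℝ),
      (-deriv (deriv (fun s => μ * s + deriv cS s)) r
          - deriv (fun s => μ * s + deriv cS s) r / r
          + (μ * r + deriv cS r) / r ^ 2
          + (μ * r + deriv cS r) *
              (deriv (fun s => μ * s + deriv cS s) r + deriv (fun s => -deriv cS s) r)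
          + nS r * (μ * r + deriv cS r)
        = μ * (μ * r + deriv cS r))
      ∧ (-deriv (deriv (fun s => -deriv cS s)) r
          - deriv (fun s => -deriv cS s) r / r
          + (-deriv cS r) / r ^ 2
        = nS r * (μ * r + deriv cS r)) := by
  intro r hr
  have hnhds : Ioi (0 : ℝ) ∈ 𝓝 r := isOpen_Ioi.mem_nhds hr
  have hc' : ContDiffOn ℝ 2 (deriv cS) (Ioi 0) := hcreg.deriv_of_isOpen isOpen_Ioi (by norm_num)
  have hc₁ : DifferentiableOn ℝ (deriv cS) (Ioi 0) := hc'.differentiableOn (by norm_num)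
  have hc₂ : DifferentiableOn ℝ (deriv (deriv cS)) (Ioi 0) :=
    (hc'.deriv_of_isOpen isOpen_Ioi (m := 1) (by norm_num)).differentiableOn one_ne_zero
  have hPoisson' : radialLaplacian 0 cS =ᶠ[𝓝 r] fun s => -nS s :=
    eventually_of_mem hnhds fun s hs => by
      simp only [radialLaplacian, ← hPoisson s hs]
      ring
  have hΔc' : radialLaplacian 1 (deriv cS) r = nS r * (μ * r + deriv cS r) := by
    rw [← deriv_radialLaplacian_zero hr.ne' (hc₁.differentiableAt hnhds)
      (hc₂.differentiableAt hnhds), hPoisson'.deriv_eq, deriv.fun_neg]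
    linarith [hForce r hr]
  have hΔf := radialLaplacian_one_linear_add μ hr.ne'
    (eventually_of_mem hnhds fun s hs => hc₁.differentiableAt (isOpen_Ioi.mem_nhds hs))
  have hΔG := radialLaplacian_neg 1 (deriv cS) r
  rw [hΔc'] at hΔf hΔG
  simp only [radialLaplacian, Nat.cast_one, one_pow, one_mul] at hΔf hΔG
  simp only [deriv_linear_add μ (hc₁.differentiableAt hnhds), deriv.fun_neg] at hΔf hΔG ⊢
  constructor
  · linear_combination -hΔf
  · linear_combination -hΔG

/-- On the first non-radial spherical harmonic mode (`k = 1`), `λ = μ` is an eigenvalue: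
if the radial profiles satisfy the Poisson equation `−c∞'' − c∞'/r = n∞` and the force
balance `n∞' + (μr + c∞') n∞ = 0`, then `f = μr + c∞'` and `G = −c∞'` solve the `k = 1`
eigenvalue system with eigenvalue `μ`. -/
theorem eigenvalue_mu_first_mode
    (μ : ℝ) (hμ : 0 < μ)
    (nS cS : ℝ → ℝ)
    (hnreg : ContDiffOn ℝ 2 nS (Ioi 0)) (hcreg : ContDiffOn ℝ 3 cS (Ioi 0))
    (hPoisson : ∀ r > (0:ℝ), -deriv (deriv cS) r - deriv cS r / r = nS r)
    (hForce : ∀ r > (0:ℝ), deriv nS r + (μ * r + deriv cS r) * nS r = 0) :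
    ∀ r > (0:ℝ),
      (-deriv (deriv (fun s => μ * s + deriv cS s)) r
          - deriv (fun s => μ * s + deriv cS s) r / r
          + (μ * r + deriv cS r) / r ^ 2
          + (μ * r + deriv cS r) *
              (deriv (fun s => μ * s + deriv cS s) r + deriv (fun s => -deriv cS s) r)
          + nS r * (μ * r + deriv cS r)
        = μ * (μ * r + deriv cS r))
      ∧ (-deriv (deriv (fun s => -deriv cS s)) r
          - deriv (fun s => -deriv cS s) r / r
          + (-deriv cS r) / r ^ 2
        = nS r * (μ * r + deriv cS r)) :=
  eigenvalue_mu_first_mode_general μ nS cS hcreg hPoisson hForce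
end
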